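/- If some woman is strictly better-off under a matching N than under the men-proposing Gale-Shapley matching O (judged by true preferences), and N(w) = m, then m is strictly worse-off under N than under O; i.e., every woman who gains is matched under N to a man who loses. -/

import Mathlib

namespace GS

/-- The `k` most-preferred elements of `S` according to the rank function `rank`
(lower rank = more preferred); if `S` has at most `k` elements this is all of `S`. -/
def topk {α : Type*} [DecidableEq α] (rank : α → ℕ) (k : ℕ) (S : Finset α) : Finset α :=
  S.filter fun a => (S.filter fun b => rank b < rank a).card < k

/-- An instance of the stable-matching problem with `n` women and `n` men.
`mpref m w` is the rank man `m` assigns to woman `w` (lower = more preferred),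
and `wpref w m` is the rank woman `w` assigns to man `m`. -/
structure Instance (n : ℕ) where
  mpref : Fin n → Fin n → ℕ
  wpref : Fin n → Fin n → ℕ
  mprefInj : ∀ m, Function.Injective (mpref m)
  wprefInj : ∀ w, Function.Injective (wpref w)

variable {n : ℕ}

/-- `prefers p a b` : `a` is strictly preferred to `b` under rank function `p`. -/
def prefers (p : Fin n → ℕ) (a b : Fin n) : Prop := p a < p b

/-- Given the current state `avail m` (the women who have not yet rejected man `m`),
the set of women man `m` proposes to tonight: his most-preferred available woman
(a singleton, or empty if no woman is available). -/
def proposals (I : Instance n) (avail : Fin n → Finset (Fin n)) (m : Fin n) :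
    Finset (Fin n) := topk (I.mpref m) 1 (avail m)

/-- The men proposing to woman `w` tonight. -/
def proposersOf (I : Instance n) (avail : Fin n → Finset (Fin n)) (w : Fin n) :
    Finset (Fin n) := Finset.univ.filter fun m => w ∈ proposals I avail m

/-- The men rejected by woman `w` tonight: all of tonight's proposers except
her most-preferred one. -/
def rejectedBy (I : Instance n) (avail : Fin n → Finset (Fin n)) (w : Fin n) :
    Finset (Fin n) := proposersOf I avail w \ topk (I.wpref w) 1 (proposersOf I avail w)

/-- One night of the men-proposing Gale-Shapley algorithm. -/
def step (I : Instance n) (avail : Fin n → Finset (Fin n)) :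
    Fin n → Finset (Fin n) :=
  fun m => (avail m).filter fun w => m ∉ rejectedBy I avail w

/-- `nights I t m` : the set of women who have not rejected man `m` before night `t`
(initially all women). -/
def nights (I : Instance n) (t : ℕ) : Fin n → Finset (Fin n) :=
  (step I)^[t] (fun _ => Finset.univ)

/-- The algorithm has terminated by night `T`: no man is rejected on night `T`. -/
def Stopped (I : Instance n) (T : ℕ) : Prop := step I (nights I T) = nights I T

/-- On night `T`, each man `m` serenades exactly under the window of `μ m`. -/
def MatchesAt (I : Instance n) (T : ℕ) (μ : Fin n ≃ Fin n) : Prop :=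
  ∀ m, proposals I (nights I T) m = {μ m}

/-- The bijection `μ` (from men to women) is the outcome of the men-proposing
Gale-Shapley algorithm on instance `I`: for some night `T` no rejection occurs and
every man `m` is matched with `μ m`. -/
def IsGSMatching (I : Instance n) (μ : Fin n ≃ Fin n) : Prop :=
  ∃ T, Stopped I T ∧ MatchesAt I T μ

/-- Stability of a matching `μ` (men to women): there is no unmatched pair `(w, m)`
each of whom strictly prefers the other to their partner under `μ`. -/
def Stable (I : Instance n) (μ : Fin n ≃ Fin n) : Prop :=
  ¬ ∃ m w, μ m ≠ w ∧ I.mpref m w < I.mpref m (μ m) ∧ I.wpref w m < I.wpref w (μ.symm w)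

/-- The instance in which the women in `L` replace their true preferences by the
false preference rankings `f`, everyone else being truthful. -/
def liarInstance (I : Instance n) (L : Finset (Fin n))
    (f : Fin n → Fin n → ℕ) (hf : ∀ w, Function.Injective (f w)) : Instance n where
  mpref := I.mpref
  wpref := fun w => if w ∈ L then f w else I.wpref w
  mprefInj := I.mprefInj
  wprefInj := fun w => by split_ifs; exacts [hf w, I.wprefInj w]

end GS

/-!
During men-proposing deferred acceptance a woman who rejects a man does so in favour of a
suitor she prefers, and her best suitor can only improve from night to night. At the final
night each woman `w` has the single suitor `O⁻¹ w`, so every man who was rejected by `w`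
ranks below `O⁻¹ w` for her: `O` is stable. If `w` prefers `m = N⁻¹ w` to `O⁻¹ w`, then
`m ≠ O⁻¹ w`, so `O m ≠ w`, and stability forbids `m` from preferring `w` to `O m`; with strict
preferences, `m` prefers `O m` to `w = N m`.
-/

namespace GS

variable {n : ℕ}

theorem mem_topk_one {α : Type*} [DecidableEq α] {rank : α → ℕ} {S : Finset α} {a : α} :
    a ∈ topk rank 1 S ↔ a ∈ S ∧ ∀ b ∈ S, ¬ rank b < rank a := by
  simp [topk, Finset.card_eq_zero, Finset.filter_eq_empty_iff]

theorem topk_one_nonempty {α : Type*} [DecidableEq α] (rank : α → ℕ) {S : Finset α}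
    (hS : S.Nonempty) : (topk rank 1 S).Nonempty := by
  obtain ⟨a, ha, hmin⟩ := Finset.exists_min_image S rank hS
  exact ⟨a, mem_topk_one.2 ⟨ha, fun b hb => not_lt.2 (hmin b hb)⟩⟩

theorem nights_succ (I : Instance n) (t : ℕ) :
    nights I (t + 1) = step I (nights I t) :=
  Function.iterate_succ_apply' _ _ _

theorem mem_proposals_iff {I : Instance n} {avail : Fin n → Finset (Fin n)} {m w : Fin n} :
    w ∈ proposals I avail m ↔ w ∈ avail m ∧ ∀ w' ∈ avail m, ¬ I.mpref m w' < I.mpref m w :=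
  mem_topk_one

theorem mem_proposersOf_iff {I : Instance n} {avail : Fin n → Finset (Fin n)} {w m : Fin n} :
    m ∈ proposersOf I avail w ↔ w ∈ proposals I avail m := by
  simp [proposersOf]

theorem mem_step_iff {I : Instance n} {avail : Fin n → Finset (Fin n)} {m w : Fin n} :
    w ∈ step I avail m ↔ w ∈ avail m ∧ m ∉ rejectedBy I avail w :=
  Finset.mem_filter

/-- A woman's favourite suitor is not rejected, and his own choice does not change since
his options only shrink. -/
theorem mem_proposersOf_step_of_mem_topk {I : Instance n} {avail : Fin n → Finset (Fin n)}
    {w m : Fin n} (hm : m ∈ topk (I.wpref w) 1 (proposersOf I avail w)) :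
    m ∈ proposersOf I (step I avail) w := by
  have hprop : w ∈ proposals I avail m := mem_proposersOf_iff.1 (mem_topk_one.1 hm).1
  obtain ⟨hw_avail, hw_best⟩ := mem_proposals_iff.1 hprop
  have hkept : m ∉ rejectedBy I avail w := fun hrej => (Finset.mem_sdiff.1 hrej).2 hm
  refine mem_proposersOf_iff.2 (mem_proposals_iff.2 ⟨mem_step_iff.2 ⟨hw_avail, hkept⟩, ?_⟩)
  exact fun w' hw' => hw_best w' (mem_step_iff.1 hw').1

def HasSuitorPreferredTo (I : Instance n) (avail : Fin n → Finset (Fin n)) (w m : Fin n) :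
    Prop :=
  ∃ m' ∈ proposersOf I avail w, I.wpref w m' < I.wpref w m

theorem HasSuitorPreferredTo.of_mem_rejectedBy {I : Instance n}
    {avail : Fin n → Finset (Fin n)} {w m : Fin n} (h : m ∈ rejectedBy I avail w) :
    HasSuitorPreferredTo I avail w m := by
  obtain ⟨hprop, hnot_top⟩ := Finset.mem_sdiff.1 h
  by_contra hnone
  exact hnot_top (mem_topk_one.2 ⟨hprop, fun m' hm' hlt => hnone ⟨m', hm', hlt⟩⟩)

theorem HasSuitorPreferredTo.step {I : Instance n} {avail : Fin n → Finset (Fin n)}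
    {w m : Fin n} (h : HasSuitorPreferredTo I avail w m) :
    HasSuitorPreferredTo I (step I avail) w m := by
  obtain ⟨m', hm', hlt⟩ := h
  obtain ⟨m'', hm''⟩ := topk_one_nonempty (I.wpref w) ⟨m', hm'⟩
  refine ⟨m'', mem_proposersOf_step_of_mem_topk hm'', ?_⟩
  exact (not_lt.1 ((mem_topk_one.1 hm'').2 m' hm')).trans_lt hlt

theorem hasSuitorPreferredTo_nights_of_not_mem {I : Instance n} {w m : Fin n} :
    ∀ {t : ℕ}, w ∉ nights I t m → HasSuitorPreferredTo I (nights I t) w m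
  | 0, hw => (hw (Finset.mem_univ w)).elim
  | t + 1, hw => by
    rw [nights_succ] at hw ⊢
    by_cases hwt : w ∈ nights I t m
    · have hrej : m ∈ rejectedBy I (nights I t) w := by
        by_contra hkept
        exact hw (mem_step_iff.2 ⟨hwt, hkept⟩)
      exact (HasSuitorPreferredTo.of_mem_rejectedBy hrej).step
    · exact (hasSuitorPreferredTo_nights_of_not_mem hwt).step

theorem MatchesAt.eq_symm_of_mem_proposersOf {I : Instance n} {T : ℕ} {μ : Fin n ≃ Fin n}
    (hμ : MatchesAt I T μ) {w m : Fin n} (hm : m ∈ proposersOf I (nights I T) w) :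
    m = μ.symm w := by
  have hw : w ∈ ({μ m} : Finset (Fin n)) := hμ m ▸ mem_proposersOf_iff.1 hm
  rw [Finset.mem_singleton.1 hw, Equiv.symm_apply_apply]

theorem MatchesAt.stable {I : Instance n} {T : ℕ} {μ : Fin n ≃ Fin n}
    (hμ : MatchesAt I T μ) : Stable I μ := by
  rintro ⟨m, w, -, hm_prefers, hw_prefers⟩
  have hμm : μ m ∈ proposals I (nights I T) m := by
    rw [hμ m]
    exact Finset.mem_singleton_self _
  have hw_gone : w ∉ nights I T m := fun hw =>
    (mem_proposals_iff.1 hμm).2 w hw hm_prefers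
  obtain ⟨m', hm', hlt⟩ := hasSuitorPreferredTo_nights_of_not_mem hw_gone
  rw [hμ.eq_symm_of_mem_proposersOf hm'] at hlt
  exact lt_asymm hlt hw_prefers

end GS

open GS in
/-- Every woman who is strictly better-off under a matching `N` than under the
men-proposing Gale-Shapley matching `O` is matched under `N` to a man who is
strictly worse-off. -/
theorem better_off_woman_matched_to_worse_off_man (n : ℕ) (I : GS.Instance n)
    (O : Fin n ≃ Fin n) (hO : IsGSMatching I O)
    (N : Fin n ≃ Fin n) (w m : Fin n) (hm : N.symm w = m)
    (hbetter : prefers (I.wpref w) m (O.symm w)) :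
    prefers (I.mpref m) (O m) (N m) := by
  obtain ⟨T, -, hT⟩ := hO
  have hNm : N m = w := by rw [← hm, Equiv.apply_symm_apply]
  have hOm : O m ≠ w := by
    rintro rfl
    rw [Equiv.symm_apply_apply] at hbetter
    exact lt_irrefl _ hbetter
  have hnot_blocking : ¬ I.mpref m w < I.mpref m (O m) := fun hm_prefers =>
    hT.stable ⟨m, w, hOm, hm_prefers, hbetter⟩
  rw [prefers, hNm]
  exact lt_of_le_of_ne (not_lt.1 hnot_blocking) fun h => hOm (I.mprefInj m h)
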